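/- Let k be a field and A a finite-dimensional unital associative k-algebra. Let r ∈ A⊗A. Then r12·r13 + r13·r23 − r23·r12 = 0 in A⊗A⊗A if and only if F_r(a*)·F_r(b*) = F_r(R*(F_r(a*))b* − a* L*(F_{σ(r)}(b*))) for all a*, b* ∈ A*. -/
import Mathlib


open TensorProduct

/-- `r ↦ r₁₂ = Σ aᵢ ⊗ bᵢ ⊗ 1` in `A ⊗ (A ⊗ A)`. -/
noncomputable def e12 (k A : Type) [Field k] [Ring A] [Algebra k A] :
    A ⊗[k] A →ₗ[k] A ⊗[k] (A ⊗[k] A) :=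
  TensorProduct.map LinearMap.id ((TensorProduct.mk k A A).flip 1)

/-- `r ↦ r₁₃ = Σ aᵢ ⊗ 1 ⊗ bᵢ` in `A ⊗ (A ⊗ A)`. -/
noncomputable def e13 (k A : Type) [Field k] [Ring A] [Algebra k A] :
    A ⊗[k] A →ₗ[k] A ⊗[k] (A ⊗[k] A) :=
  TensorProduct.map LinearMap.id (TensorProduct.mk k A A 1)

/-- `r ↦ r₂₃ = Σ 1 ⊗ aᵢ ⊗ bᵢ` in `A ⊗ (A ⊗ A)`. -/
noncomputable def e23 (k A : Type) [Field k] [Ring A] [Algebra k A] :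
    A ⊗[k] A →ₗ[k] A ⊗[k] (A ⊗[k] A) :=
  TensorProduct.mk k A (A ⊗[k] A) 1

/-- For `r ∈ A ⊗ A`, the induced map `F_r : A* → A`, characterized by
`b*(F_r(a*)) = (a* ⊗ b*)(r)`. -/
noncomputable def Fr {k A : Type} [Field k] [AddCommGroup A] [Module k A]
    (r : A ⊗[k] A) (f : Module.Dual k A) : A :=
  TensorProduct.lid k A (LinearMap.rTensor A f r)

section Aux

variable {k A : Type} [Field k] [AddCommGroup A] [Module k A]

/-- Contraction of the left factor against a functional. -/
noncomputable def ctL {M : Type} [AddCommGroup M] [Module k M]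
    (f : Module.Dual k A) : A ⊗[k] M →ₗ[k] M :=
  (TensorProduct.lid k M).toLinearMap ∘ₗ LinearMap.rTensor M f

@[simp] lemma ctL_tmul {M : Type} [AddCommGroup M] [Module k M]
    (f : Module.Dual k A) (x : A) (m : M) : ctL f (x ⊗ₜ[k] m) = f x • m := by
  simp [ctL]

lemma Fr_eq (r : A ⊗[k] A) (f : Module.Dual k A) : Fr r f = ctL f r := rfl

lemma ctL_sub_f {M : Type} [AddCommGroup M] [Module k M]
    (f g : Module.Dual k A) (x : A ⊗[k] M) :
    ctL (f - g) x = ctL f x - ctL g x := by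
  induction x using TensorProduct.induction_on with
  | zero => simp
  | tmul y m => simp [sub_smul]
  | add u v hu hv => simp only [map_add, hu, hv]; abel

lemma ctL_add_f {M : Type} [AddCommGroup M] [Module k M]
    (f g : Module.Dual k A) (x : A ⊗[k] M) :
    ctL (f + g) x = ctL f x + ctL g x := by
  induction x using TensorProduct.induction_on with
  | zero => simp
  | tmul y m => simp [add_smul]
  | add u v hu hv => simp only [map_add, hu, hv]; abel

/-- If all contractions of `T : A ⊗ M` against functionals on `A` vanish, `T = 0`. -/
lemma ctL_eq_zero {M : Type} [AddCommGroup M] [Module k M]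
    (T : A ⊗[k] M) (h : ∀ f : Module.Dual k A, ctL f T = 0) : T = 0 := by
  classical
  obtain ⟨c, hc⟩ := TensorProduct.eq_repr_basis_left (Module.Free.chooseBasis k A) T
  have hcz : c = 0 := by
    ext i
    have h1 := h ((Module.Free.chooseBasis k A).coord i)
    rw [← hc, map_finsuppSum] at h1
    simpa [Module.Basis.coord_apply, Module.Basis.repr_self, Finsupp.single_apply,
      Finsupp.sum_ite_eq'] using h1
  rw [← hc, hcz]
  simp

end Aux

section Prod

variable {k A : Type} [Field k] [Ring A] [Algebra k A]

lemma L1 (a b : Module.Dual k A) (r s : A ⊗[k] A) :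
    ctL b (ctL a (e13 k A r * e23 k A s)) = ctL a r * ctL b s := by
  induction r using TensorProduct.induction_on with
  | zero => simp
  | add u v hu hv => simp only [map_add, add_mul, hu, hv]
  | tmul x y =>
    induction s using TensorProduct.induction_on with
    | zero => simp
    | add u v hu hv => simp only [map_add, mul_add, hu, hv]
    | tmul u v =>
      simp [e13, e23, Algebra.TensorProduct.tmul_mul_tmul, mul_smul_comm,
        smul_mul_assoc, smul_smul, mul_comm]

lemma L2 (a b : Module.Dual k A) (r s : A ⊗[k] A) :
    ctL b (ctL a (e23 k A r * e12 k A s)) =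
      ctL (b ∘ₗ LinearMap.mulRight k (ctL a s)) r := by
  induction r using TensorProduct.induction_on with
  | zero => simp
  | add u v hu hv => simp only [map_add, add_mul, hu, hv]
  | tmul x y =>
    induction s using TensorProduct.induction_on with
    | zero => simp
    | add u v hu hv =>
      simp only [map_add, mul_add, hu, hv, ctL_tmul, LinearMap.comp_apply,
        LinearMap.mulRight_apply, mul_add, map_add, add_smul]
    | tmul u v =>
      simp [e23, e12, Algebra.TensorProduct.tmul_mul_tmul, mul_smul_comm,
        smul_mul_assoc, smul_smul, mul_comm]

lemma L3 (a b : Module.Dual k A) (r s : A ⊗[k] A) :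
    ctL b (ctL a (e12 k A r * e13 k A s)) =
      ctL (a ∘ₗ LinearMap.mulLeft k (ctL b (TensorProduct.comm k A A r))) s := by
  induction s using TensorProduct.induction_on with
  | zero => simp
  | add u v hu hv => simp only [map_add, mul_add, hu, hv]
  | tmul u v =>
    induction r using TensorProduct.induction_on with
    | zero => simp
    | add p q hp hq =>
      simp only [map_add, add_mul, hp, hq, ctL_tmul, LinearMap.comp_apply,
        LinearMap.mulLeft_apply, add_mul, map_add, add_smul]
    | tmul x y =>
      simp [e12, e13, Algebra.TensorProduct.tmul_mul_tmul, mul_smul_comm,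
        smul_mul_assoc, smul_smul, mul_comm]

end Prod

/-- Theorem 3.5(i): `r` is a solution of the AYBE
`r₁₂r₁₃ + r₁₃r₂₃ − r₂₃r₁₂ = 0` iff
`F_r(a*)·F_r(b*) = F_r(R*(F_r(a*))b* − a*L*(F_{σ(r)}(b*)))` for all `a*, b* ∈ A*`. -/
theorem stmt9 {k A : Type} [Field k] [Ring A] [Algebra k A] [FiniteDimensional k A]
    (r : A ⊗[k] A) :
    (e12 k A r * e13 k A r + e13 k A r * e23 k A r - e23 k A r * e12 k A r = 0) ↔
      (∀ a b : Module.Dual k A,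
        Fr r a * Fr r b =
          Fr r ((b ∘ₗ LinearMap.mulRight k (Fr r a)) -
            (a ∘ₗ LinearMap.mulLeft k (Fr (TensorProduct.comm k A A r) b)))) := by
  have key : ∀ a b : Module.Dual k A,
      ctL b (ctL a (e12 k A r * e13 k A r + e13 k A r * e23 k A r
        - e23 k A r * e12 k A r)) =
      Fr r a * Fr r b -
        Fr r ((b ∘ₗ LinearMap.mulRight k (Fr r a)) -
          (a ∘ₗ LinearMap.mulLeft k (Fr (TensorProduct.comm k A A r) b))) := by
    intro a b
    simp only [map_add, map_sub, L1, L2, L3, Fr_eq, ctL_sub_f]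
    abel
  constructor
  · intro h a b
    have h1 := key a b
    rw [h] at h1
    simp only [map_zero] at h1
    exact sub_eq_zero.mp h1.symm
  · intro h
    apply ctL_eq_zero
    intro a
    apply ctL_eq_zero
    intro b
    rw [key a b, h a b, sub_self]
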